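/- Let x: [0,∞) → ℝ be càdlàg and let (x^ε)_{ε>0} be càdlàg paths of locally finite total variation with sup_{s≥0} |x_s − x^ε_s| ≤ ε. Suppose that the limit ⟨x⟩_t := 2 lim_{ε→0+} ∫_{(0,t]} (x_s − x^ε_s) dx^ε_s exists uniformly on compact subsets of [0,∞) and that C_t := sup_{ε>0} ∫_{(0,t]} |x_s − x^ε_s| |dx^ε_s| < ∞ for every t > 0. Then the total variation of t ↦ ⟨x⟩_t on [0,t] is at most 2 C_t; in particular ⟨x⟩ has locally finite total variation. -/

import Mathlib

open MeasureTheory Filter Topology Set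
open scoped Classical

noncomputable section

/-- The jump `Δf_s = f s - f (s-)` of a path at a point. -/
def jmp (f : ℝ → ℝ) (s : ℝ) : ℝ := f s - Function.leftLim f s

/-- A path `f : ℝ → ℝ` (thought of as a path on `[0,∞)`) is càdlàg: right-continuous at
every `t ≥ 0` and with finite left limits at every `t > 0`. -/
def Cadlag (f : ℝ → ℝ) : Prop :=
  (∀ t : ℝ, 0 ≤ t → ContinuousWithinAt f (Ici t) t) ∧
    ∀ t : ℝ, 0 < t → Tendsto f (𝓝[<] t) (𝓝 (Function.leftLim f t))

/-- `p = (u, v)` is a decomposition of `y` on `[0,∞)` as a difference of two nondecreasing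
right-continuous functions. -/
def IsBVDecompOn (y : ℝ → ℝ) (p : StieltjesFunction ℝ × StieltjesFunction ℝ) : Prop :=
  ∀ s : ℝ, 0 ≤ s → y s = p.1 s - p.2 s

/-- `y` has locally finite total variation on `[0,∞)`: for right-continuous `y` with left
limits this is equivalent to admitting a Jordan decomposition `y = u - v` with `u, v`
nondecreasing and right-continuous. -/
def LocBV (y : ℝ → ℝ) : Prop := ∃ p, IsBVDecompOn y p

/-- The Lebesgue–Stieltjes integral `∫_{(0,t]} g dy` of `g` with respect to the signed
Lebesgue–Stieltjes measure `μ_u - μ_v`, where `y = u - v` with `u, v` nondecreasing and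
right-continuous.  (For integrable `g` its value does not depend on the choice of the
decomposition.) -/
def lsInt (y g : ℝ → ℝ) (t : ℝ) : ℝ :=
  if h : ∃ p, IsBVDecompOn y p then
    (∫ s in Ioc (0:ℝ) t, g s ∂(h.choose.1.measure)) -
      ∫ s in Ioc (0:ℝ) t, g s ∂(h.choose.2.measure)
  else 0

/-- The integral `∫_{(0,t]} |g| |dy|` of `|g|` with respect to the total variation measure of
the signed Lebesgue–Stieltjes measure of `y`; it is computed from a minimal (mutually
singular on `(0,∞)`) decomposition of `y`, for which the total variation measure is
`μ_u + μ_v`. -/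
def lsAbs (y g : ℝ → ℝ) (t : ℝ) : ℝ :=
  if h : ∃ p, IsBVDecompOn y p ∧
      (p.1.measure.restrict (Ioi 0)).MutuallySingular (p.2.measure.restrict (Ioi 0)) then
    ∫ s in Ioc (0:ℝ) t, |g s| ∂(h.choose.1.measure + h.choose.2.measure)
  else 0

/-- The truncated variation of `x` on `[a,b]` with truncation parameter `ε`. -/
def TTV (x : ℝ → ℝ) (a b ε : ℝ) : ℝ :=
  sSup {v : ℝ | ∃ (n : ℕ) (t : ℕ → ℝ), a ≤ t 0 ∧ t n ≤ b ∧ (∀ i, i < n → t i < t (i + 1)) ∧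
    v = ∑ i ∈ Finset.range n, max (|x (t (i + 1)) - x (t i)| - ε) 0}

/-- The upward truncated variation of `x` on `[a,b]` with truncation parameter `ε`. -/
def UTV (x : ℝ → ℝ) (a b ε : ℝ) : ℝ :=
  sSup {v : ℝ | ∃ (n : ℕ) (t : ℕ → ℝ), a ≤ t 0 ∧ t n ≤ b ∧ (∀ i, i < n → t i < t (i + 1)) ∧
    v = ∑ i ∈ Finset.range n, max (x (t (i + 1)) - x (t i) - ε) 0}

/-- The downward truncated variation of `x` on `[a,b]` with truncation parameter `ε`. -/
def DTV (x : ℝ → ℝ) (a b ε : ℝ) : ℝ :=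
  sSup {v : ℝ | ∃ (n : ℕ) (t : ℕ → ℝ), a ≤ t 0 ∧ t n ≤ b ∧ (∀ i, i < n → t i < t (i + 1)) ∧
    v = ∑ i ∈ Finset.range n, max (x (t i) - x (t (i + 1)) - ε) 0}

/-- The standing assumptions: `x` is càdlàg with `Σ_{0<s≤t} (Δx_s)² < ∞` for all `t > 0`;
`𝒳 = (xe ε)_{ε>0}` is a family of càdlàg paths of locally finite total variation with
`sup_{s ≥ 0} |x s - xe ε s| ≤ ε`; `q = ⟨x⟩` is the uniform-on-compacts limit of
`2 ∫_{(0,·]} (x - xe ε) d(xe ε)` as `ε → 0+`;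
`sup_{ε>0} ∫_{(0,t]} |x - xe ε| |d(xe ε)| < ∞` for every `t > 0`; and there is a constant
`K` with `|Δ(xe ε)_s| ≤ K |Δx_s|` for all `s > 0` and `ε > 0`. -/
structure StandingAssumptions (x : ℝ → ℝ) (xe : ℝ → ℝ → ℝ) (q : ℝ → ℝ) : Prop where
  cadlag_x : Cadlag x
  jumps_sq_summable : ∀ t : ℝ, 0 < t → Summable fun s : Ioc (0:ℝ) t => jmp x (s : ℝ) ^ 2
  cadlag_xe : ∀ ε : ℝ, 0 < ε → Cadlag (xe ε)
  bv_xe : ∀ ε : ℝ, 0 < ε → LocBV (xe ε)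
  approx : ∀ ε : ℝ, 0 < ε → ∀ s : ℝ, 0 ≤ s → |x s - xe ε s| ≤ ε
  qv_unif : ∀ T : ℝ, 0 ≤ T →
    TendstoUniformlyOn (fun ε s => 2 * lsInt (xe ε) (fun r => x r - xe ε r) s) q
      (𝓝[>] 0) (Icc 0 T)
  bdd : ∀ t : ℝ, 0 < t → ∃ C : ℝ, ∀ ε : ℝ, 0 < ε →
    lsAbs (xe ε) (fun r => x r - xe ε r) t ≤ C
  jump_bdd : ∃ K : ℝ, ∀ ε : ℝ, 0 < ε → ∀ s : ℝ, 0 < s → |jmp (xe ε) s| ≤ K * |jmp x s|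

open scoped ENNReal

/-!
Over a partition `0 ≤ u₀ ≤ ⋯ ≤ uₙ ≤ t`, each increment of `I_ε = ∫_{(0,·]} (x - xᵉ) dxᵉ` is
bounded by the integral of `|x - xᵉ|` over `(uᵢ, uᵢ₊₁]` against `μ_u + μ_v`, for any decomposition
`xᵉ = u - v`. Choosing `u, v` with mutually singular Stieltjes measures (so that
`|dxᵉ| = μ_u + μ_v`), the variation of `I_ε` on `[0,t]` is at most `∫_{(0,t]} |x - xᵉ| |dxᵉ| ≤ C_t`.
Such a decomposition comes from the Radon–Nikodym densities of `μ_u, μ_v` with respect to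
`μ_u + μ_v`. Since `2 I_ε → ⟨x⟩` pointwise, lower semicontinuity of the variation gives `2 C_t`.
-/

theorem measurable_of_continuousWithinAt_Ici {β : Type*} [TopologicalSpace β]
    [TopologicalSpace.PseudoMetrizableSpace β] [MeasurableSpace β] [BorelSpace β] {f : ℝ → β}
    (hf : ∀ s, ContinuousWithinAt f (Ici s) s) : Measurable f := by
  -- dyadic approximation from the right, which is where right-continuity applies
  set d : ℕ → ℝ → ℝ := fun n s => ⌈s * 2 ^ n⌉ / 2 ^ n
  have hd_meas (n : ℕ) : Measurable fun s => f (d n s) :=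
    (measurable_from_top (f := fun k : ℤ => f (k / 2 ^ n))).comp
      (measurable_id.mul_const _).ceil
  refine measurable_of_tendsto_metrizable hd_meas (tendsto_pi_nhds.2 fun s => ?_)
  have hle (n : ℕ) : s ≤ d n s := by
    rw [le_div_iff₀ (by positivity)]
    exact Int.le_ceil _
  have hge (n : ℕ) : d n s ≤ s + (1 / 2) ^ n := by
    rw [div_le_iff₀ (by positivity), add_mul, ← mul_pow]
    norm_num
    exact (Int.ceil_lt_add_one _).le
  have hlim : Tendsto (fun n => s + (1 / 2 : ℝ) ^ n) atTop (𝓝 s) := by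
    simpa using tendsto_const_nhds.add
      (tendsto_pow_atTop_nhds_zero_of_lt_one (by norm_num : (0 : ℝ) ≤ 1 / 2) (by norm_num))
  refine (hf s).tendsto.comp (tendsto_nhdsWithin_of_tendsto_nhds_of_eventually_within _ ?_
    (Eventually.of_forall hle))
  exact tendsto_of_tendsto_of_tendsto_of_le_of_le tendsto_const_nhds hlim hle hge

theorem integrableOn_Ioc_of_continuousWithinAt_Ici {g : ℝ → ℝ} {a c : ℝ} (μ : Measure ℝ)
    [IsLocallyFiniteMeasure μ] (hg : ∀ s, a ≤ s → ContinuousWithinAt g (Ici s) s)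
    (hb : ∀ s, a ≤ s → |g s| ≤ c) (b : ℝ) : IntegrableOn g (Ioc a b) μ := by
  have hmeas : Measurable fun s => g (max s a) :=
    measurable_of_continuousWithinAt_Ici fun s => (hg _ (le_max_right s a)).comp
      (f := fun r => max r a) (continuous_id.max continuous_const).continuousWithinAt
      fun _ hr => max_le_max_right a hr
  refine (Measure.integrableOn_of_bounded (M := c) measure_Ioc_lt_top.ne
    hmeas.aestronglyMeasurable ?_).congr_fun (fun s hs => congrArg g (max_eq_left hs.1.le))
    measurableSet_Ioc
  filter_upwards [ae_restrict_mem measurableSet_Ioc] with s hs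
  exact hb _ (le_max_right s a)

namespace MeasureTheory.Measure

def stieltjesIic (μ : Measure ℝ) (hμ : ∀ x, μ (Iic x) ≠ ∞) : StieltjesFunction ℝ where
  toFun x := μ.real (Iic x)
  mono' := fun _ _ h => measureReal_mono (Iic_subset_Iic.2 h) (hμ _)
  right_continuous' := fun x => by
    rw [← continuousWithinAt_Ioi_iff_Ici]
    have h := tendsto_measure_biInter_gt (μ := μ) (s := Iic) (a := x)
      (fun r _ => measurableSet_Iic.nullMeasurableSet) (fun r s _ hrs => Iic_subset_Iic.2 hrs)
      ⟨x + 1, by simp, hμ _⟩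
    have hI : ⋂ r > x, Iic r = Iic x := by
      ext y
      simp only [mem_iInter, mem_Iic]
      exact forall_gt_imp_ge_iff_le_of_dense
    rw [hI] at h
    exact (ENNReal.tendsto_toReal (hμ x)).comp h

@[simp]
theorem stieltjesIic_apply (μ : Measure ℝ) (hμ : ∀ x, μ (Iic x) ≠ ∞) (x : ℝ) :
    μ.stieltjesIic hμ x = μ.real (Iic x) := rfl

@[simp]
theorem measure_stieltjesIic (μ : Measure ℝ) (hμ : ∀ x, μ (Iic x) ≠ ∞) :
    (μ.stieltjesIic hμ).measure = μ := by
  refine ext_of_Ioc' _ _ (fun a b _ => by simp [StieltjesFunction.measure_Ioc]) fun a b hab => ?_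
  have hdiff : Iic b \ Iic a = Ioc a b := by ext; simp [and_comm]
  rw [StieltjesFunction.measure_Ioc, stieltjesIic_apply, stieltjesIic_apply, ← hdiff,
    ← measureReal_sdiff (Iic_subset_Iic.2 hab.le) measurableSet_Iic (hμ b),
    ofReal_measureReal (measure_ne_top_of_subset sdiff_subset (hμ b))]

variable {α : Type*} [MeasurableSpace α]

theorem exists_mutuallySingular_add_eq_add (μ ν : Measure α) [SigmaFinite μ] [SigmaFinite ν] :
    ∃ μ' ν' : Measure α, μ' ≤ μ ∧ ν' ≤ ν ∧ μ' + ν = ν' + μ ∧ μ' ⟂ₘ ν' := by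
  set ρ := μ + ν
  set f := μ.rnDeriv ρ
  set g := ν.rnDeriv ρ
  have hf : Measurable f := measurable_rnDeriv μ ρ
  have hg : Measurable g := measurable_rnDeriv ν ρ
  have hμ : ρ.withDensity f = μ :=
    withDensity_rnDeriv_eq μ ρ (Measure.le_add_right le_rfl).absolutelyContinuous
  have hν : ρ.withDensity g = ν :=
    withDensity_rnDeriv_eq ν ρ (Measure.le_add_left le_rfl).absolutelyContinuous
  refine ⟨ρ.withDensity (f - g), ρ.withDensity (g - f), ?_, ?_, ?_, ?_⟩
  · exact hμ ▸ withDensity_mono (Eventually.of_forall fun x => tsub_le_self)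
  · exact hν ▸ withDensity_mono (Eventually.of_forall fun x => tsub_le_self)
  · conv_lhs => rw [← hν, ← withDensity_add_right _ hg]
    conv_rhs => rw [← hμ, ← withDensity_add_right _ hf]
    congr 1
    ext x
    simp only [Pi.add_apply, Pi.sub_apply, tsub_add_eq_max, max_comm]
  · refine ⟨{x | f x ≤ g x}, measurableSet_le hf hg, ?_, ?_⟩
    · rw [withDensity_apply _ (measurableSet_le hf hg)]
      exact setLIntegral_eq_zero (measurableSet_le hf hg) fun x hx => tsub_eq_zero_of_le hx
    · rw [withDensity_apply _ (measurableSet_le hf hg).compl]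
      exact setLIntegral_eq_zero (measurableSet_le hf hg).compl fun x hx =>
        tsub_eq_zero_of_le (not_le.1 (show ¬f x ≤ g x from hx)).le

end MeasureTheory.Measure

theorem eVariationOn_le_ofReal_of_sum_le {α : Type*} [LinearOrder α] {f : α → ℝ} {s : Set α}
    {c : ℝ} (h : ∀ (n : ℕ) (u : ℕ → α), Monotone u → (∀ i, u i ∈ s) →
      ∑ i ∈ Finset.range n, |f (u (i + 1)) - f (u i)| ≤ c) :
    eVariationOn f s ≤ ENNReal.ofReal c :=
  iSup_le fun ⟨n, u, hu, hus⟩ => by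
    simp only [edist_dist, Real.dist_eq]
    rw [← ENNReal.ofReal_sum_of_nonneg fun i _ => abs_nonneg _]
    exact ENNReal.ofReal_le_ofReal (h n u hu hus)

theorem eVariationOn_le_of_tendsto {α E ι : Type*} [LinearOrder α] [PseudoEMetricSpace E]
    {F : ι → α → E} {l : Filter ι} [l.NeBot] {f : α → E} {s : Set α}
    (hF : ∀ x ∈ s, Tendsto (fun i => F i x) l (𝓝 (f x))) {c : ℝ≥0∞}
    (hc : ∀ᶠ i in l, eVariationOn (F i) s ≤ c) : eVariationOn f s ≤ c := by
  by_contra! h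
  obtain ⟨i, hlt, hle⟩ := ((eVariationOn.lowerSemicontinuous_aux hF h).and hc).exists
  exact (hlt.trans_le hle).false

theorem StieltjesFunction.restrict_measure_Ioi_eq_of_eqOn {f g : StieltjesFunction ℝ} {a : ℝ}
    (h : EqOn f g (Ici a)) : f.measure.restrict (Ioi a) = g.measure.restrict (Ioi a) := by
  refine Measure.ext_of_Ioc' _ _
    (fun c d _ => ((Measure.restrict_apply_le _ _).trans_lt measure_Ioc_lt_top).ne)
    fun c d _ => ?_
  rw [Measure.restrict_apply measurableSet_Ioc, Measure.restrict_apply measurableSet_Ioc,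
    Ioc_inter_Ioi]
  rcases le_total d (max c a) with hd | hd
  · simp [Ioc_eq_empty_of_le hd]
  · rw [measure_Ioc, measure_Ioc, h (le_max_right c a), h ((le_max_right c a).trans hd)]

theorem LocBV.exists_isBVDecompOn_mutuallySingular {y : ℝ → ℝ} (hy : LocBV y) :
    ∃ p, IsBVDecompOn y p ∧ p.1.measure.restrict (Ioi 0) ⟂ₘ p.2.measure.restrict (Ioi 0) := by
  obtain ⟨⟨u, v⟩, huv⟩ := hy
  obtain ⟨μ, ν, hμ, hν, hadd, hsing⟩ :=
    Measure.exists_mutuallySingular_add_eq_add (u.measure.restrict (Ioi 0))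
      (v.measure.restrict (Ioi 0))
  have hIic (w : StieltjesFunction ℝ) (x : ℝ) :
      w.measure.restrict (Ioi 0) (Iic x) = w.measure (Ioc 0 x) := by
    rw [Measure.restrict_apply measurableSet_Iic, Iic_inter_Ioi]
  have hfin {ρ : Measure ℝ} {w : StieltjesFunction ℝ} (hρ : ρ ≤ w.measure.restrict (Ioi 0))
      (x : ℝ) : ρ (Iic x) ≠ ∞ :=
    ((hρ _).trans_lt ((hIic w x).trans_lt measure_Ioc_lt_top)).ne
  refine ⟨(μ.stieltjesIic (hfin hμ) + StieltjesFunction.const ℝ (u 0 - v 0),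
    ν.stieltjesIic (hfin hν)), fun s hs => ?_, ?_⟩
  · have hreal (w : StieltjesFunction ℝ) :
        (w.measure.restrict (Ioi 0)).real (Iic s) = w s - w 0 := by
      rw [measureReal_def, hIic, StieltjesFunction.measure_Ioc,
        ENNReal.toReal_ofReal (sub_nonneg.2 (w.mono hs))]
    have h := congrArg (fun ρ : Measure ℝ => ρ.real (Iic s)) hadd
    rw [measureReal_add_apply (hfin hμ s) (hfin le_rfl s),
      measureReal_add_apply (hfin hν s) (hfin le_rfl s), hreal, hreal] at h
    simp only [huv s hs, StieltjesFunction.add_apply, Measure.stieltjesIic_apply,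
      StieltjesFunction.const_apply]
    linarith
  · simpa only [StieltjesFunction.measure_add, StieltjesFunction.measure_const, add_zero,
      Measure.measure_stieltjesIic] using ((hsing.restrict _).symm.restrict _).symm

theorem LocBV.exists_isBVDecompOn_lsAbs_eq {y : ℝ → ℝ} (hy : LocBV y) (g : ℝ → ℝ) (t : ℝ) :
    ∃ p, IsBVDecompOn y p ∧ lsAbs y g t = ∫ s in Ioc 0 t, |g s| ∂(p.1 + p.2).measure := by
  have h := hy.exists_isBVDecompOn_mutuallySingular
  exact ⟨h.choose, h.choose_spec.1, by rw [lsAbs, dif_pos h, StieltjesFunction.measure_add]⟩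

namespace IsBVDecompOn

variable {y g : ℝ → ℝ} {p : StieltjesFunction ℝ × StieltjesFunction ℝ}

theorem lsInt_eq (hp : IsBVDecompOn y p) {t : ℝ}
    (hg : ∀ w : StieltjesFunction ℝ, IntegrableOn g (Ioc 0 t) w.measure) :
    lsInt y g t = (∫ s in Ioc 0 t, g s ∂p.1.measure) - ∫ s in Ioc 0 t, g s ∂p.2.measure := by
  have hy : ∃ p, IsBVDecompOn y p := ⟨p, hp⟩
  -- `hy.choose.1 + p.2` and `p.1 + hy.choose.2` agree on `[0, ∞)`
  have hp₀ : IsBVDecompOn y hy.choose := hy.choose_spec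
  have hmeas : (hy.choose.1 + p.2).measure.restrict (Ioc 0 t)
      = (p.1 + hy.choose.2).measure.restrict (Ioc 0 t) := by
    rw [← Measure.restrict_restrict_of_subset Ioc_subset_Ioi_self,
      ← Measure.restrict_restrict_of_subset (μ := (p.1 + hy.choose.2).measure)
        Ioc_subset_Ioi_self,
      StieltjesFunction.restrict_measure_Ioi_eq_of_eqOn fun s hs => ?_]
    have := hp s hs
    have := hp₀ s hs
    simp only [StieltjesFunction.add_apply]
    linarith
  have := congrArg (fun μ => ∫ s, g s ∂μ) hmeas
  simp only [StieltjesFunction.measure_add, Measure.restrict_add,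
    integral_add_measure (hg _) (hg _)] at this
  rw [lsInt, dif_pos hy]
  linarith

theorem lsInt_sub_lsInt (hp : IsBVDecompOn y p)
    (hg : ∀ (w : StieltjesFunction ℝ) (b : ℝ), IntegrableOn g (Ioc 0 b) w.measure)
    {a b : ℝ} (ha : 0 ≤ a) (hab : a ≤ b) :
    lsInt y g b - lsInt y g a
      = (∫ s in Ioc a b, g s ∂p.1.measure) - ∫ s in Ioc a b, g s ∂p.2.measure := by
  have hsplit (w : StieltjesFunction ℝ) : (∫ s in Ioc 0 b, g s ∂w.measure)
      - ∫ s in Ioc 0 a, g s ∂w.measure = ∫ s in Ioc a b, g s ∂w.measure := by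
    simp only [← intervalIntegral.integral_of_le, ha, hab, ha.trans hab]
    exact intervalIntegral.integral_interval_sub_left
      ((intervalIntegrable_iff_integrableOn_Ioc_of_le (ha.trans hab)).2 (hg w b))
      ((intervalIntegrable_iff_integrableOn_Ioc_of_le ha).2 (hg w a))
  rw [hp.lsInt_eq (hg · b), hp.lsInt_eq (hg · a), ← hsplit, ← hsplit]
  ring

theorem abs_lsInt_sub_lsInt_le (hp : IsBVDecompOn y p)
    (hg : ∀ (w : StieltjesFunction ℝ) (b : ℝ), IntegrableOn g (Ioc 0 b) w.measure)
    {a b : ℝ} (ha : 0 ≤ a) (hab : a ≤ b) :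
    |lsInt y g b - lsInt y g a| ≤ ∫ s in Ioc a b, |g s| ∂(p.1 + p.2).measure := by
  have hint (w : StieltjesFunction ℝ) : IntegrableOn g (Ioc a b) w.measure :=
    (hg w b).mono_set (Ioc_subset_Ioc_left ha)
  rw [hp.lsInt_sub_lsInt hg ha hab, StieltjesFunction.measure_add, Measure.restrict_add,
    integral_add_measure (hint _).abs (hint _).abs]
  exact (abs_sub _ _).trans (add_le_add abs_integral_le_integral_abs abs_integral_le_integral_abs)

theorem sum_abs_lsInt_sub_le (hp : IsBVDecompOn y p)
    (hg : ∀ (w : StieltjesFunction ℝ) (b : ℝ), IntegrableOn g (Ioc 0 b) w.measure)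
    {t : ℝ} {n : ℕ} {u : ℕ → ℝ} (hu : Monotone u) (hut : ∀ i, u i ∈ Icc 0 t) :
    ∑ i ∈ Finset.range n, |lsInt y g (u (i + 1)) - lsInt y g (u i)|
      ≤ ∫ s in Ioc 0 t, |g s| ∂(p.1 + p.2).measure := by
  set μ := (p.1 + p.2).measure
  have hint : IntegrableOn (fun s => |g s|) (Ioc 0 t) μ := (hg _ t).abs
  calc ∑ i ∈ Finset.range n, |lsInt y g (u (i + 1)) - lsInt y g (u i)|
      ≤ ∑ i ∈ Finset.range n, ∫ s in u i..u (i + 1), |g s| ∂μ :=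
        Finset.sum_le_sum fun i _ => by
          rw [intervalIntegral.integral_of_le (hu i.le_succ)]
          exact hp.abs_lsInt_sub_lsInt_le hg (hut i).1 (hu i.le_succ)
    _ = ∫ s in u 0..u n, |g s| ∂μ :=
        intervalIntegral.sum_integral_adjacent_intervals fun i _ =>
          (intervalIntegrable_iff_integrableOn_Ioc_of_le (hu i.le_succ)).2
            (hint.mono_set (Ioc_subset_Ioc (hut i).1 (hut (i + 1)).2))
    _ ≤ ∫ s in Ioc 0 t, |g s| ∂μ := by
        rw [intervalIntegral.integral_of_le (hu (Nat.zero_le n))]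
        exact setIntegral_mono_set hint (Eventually.of_forall fun s => abs_nonneg _)
          (Ioc_subset_Ioc (hut 0).1 (hut n).2).eventuallyLE

end IsBVDecompOn

theorem LocBV.eVariationOn_lsInt_le {y g : ℝ → ℝ} (hy : LocBV y)
    (hg : ∀ (w : StieltjesFunction ℝ) (b : ℝ), IntegrableOn g (Ioc 0 b) w.measure) (t : ℝ) :
    eVariationOn (lsInt y g) (Icc 0 t) ≤ ENNReal.ofReal (lsAbs y g t) := by
  obtain ⟨p, hp, habs⟩ := hy.exists_isBVDecompOn_lsAbs_eq g t
  exact eVariationOn_le_ofReal_of_sum_le fun n u hu hut =>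
    habs ▸ hp.sum_abs_lsInt_sub_le hg hu hut

theorem statement6_general (x : ℝ → ℝ) (xe : ℝ → ℝ → ℝ) (q : ℝ → ℝ)
    (hx : Cadlag x)
    (hcad : ∀ ε : ℝ, 0 < ε → Cadlag (xe ε))
    (hbv : ∀ ε : ℝ, 0 < ε → LocBV (xe ε))
    (happ : ∀ ε : ℝ, 0 < ε → ∀ s : ℝ, 0 ≤ s → |x s - xe ε s| ≤ ε)
    (hq : ∀ T : ℝ, 0 ≤ T →
      TendstoUniformlyOn (fun ε s => 2 * lsInt (xe ε) (fun r => x r - xe ε r) s) q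
        (𝓝[>] 0) (Icc 0 T))
    (t : ℝ) (C : ℝ)
    (hC : ∀ ε : ℝ, 0 < ε → lsAbs (xe ε) (fun r => x r - xe ε r) t ≤ C) :
    eVariationOn q (Icc 0 t) ≤ ENNReal.ofReal (2 * C) ∧
      BoundedVariationOn q (Icc 0 t) := by
  have hvar : ∀ᶠ ε in 𝓝[>] 0, eVariationOn
      (fun s => 2 * lsInt (xe ε) (fun r => x r - xe ε r) s) (Icc 0 t)
        ≤ ENNReal.ofReal (2 * C) := by
    filter_upwards [self_mem_nhdsWithin] with ε (hε : 0 < ε)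
    have hint (w : StieltjesFunction ℝ) (b : ℝ) :
        IntegrableOn (fun r => x r - xe ε r) (Ioc 0 b) w.measure :=
      integrableOn_Ioc_of_continuousWithinAt_Ici w.measure
        (fun s hs => (hx.1 s hs).sub ((hcad ε hε).1 s hs)) (happ ε hε) b
    calc _ ≤ ‖(2 : ℝ)‖₊ * eVariationOn (lsInt (xe ε) (fun r => x r - xe ε r)) (Icc 0 t) :=
          (lipschitzWith_smul (2 : ℝ)).lipschitzOnWith.comp_eVariationOn_le (mapsTo_univ _ _)
      _ ≤ ‖(2 : ℝ)‖₊ * ENNReal.ofReal C := by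
          gcongr
          exact ((hbv ε hε).eVariationOn_lsInt_le hint t).trans
            (ENNReal.ofReal_le_ofReal (hC ε hε))
      _ = ENNReal.ofReal (2 * C) := by
          rw [ENNReal.ofReal_mul zero_le_two]; norm_num
  have hbound := eVariationOn_le_of_tendsto
    (fun s hs => (hq s hs.1).tendsto_at ⟨hs.1, le_rfl⟩) hvar
  exact ⟨hbound, ne_top_of_le_ne_top ENNReal.ofReal_ne_top hbound⟩

/-- the total variation of `⟨x⟩` on `[0,t]` is at most
`2 C_t = 2 sup_{ε>0} ∫_{(0,t]} |x - xᵉ| |dxᵉ|`; in particular `⟨x⟩` has finite total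
variation on `[0,t]`. -/
theorem statement6 (x : ℝ → ℝ) (xe : ℝ → ℝ → ℝ) (q : ℝ → ℝ)
    (hx : Cadlag x)
    (hcad : ∀ ε : ℝ, 0 < ε → Cadlag (xe ε))
    (hbv : ∀ ε : ℝ, 0 < ε → LocBV (xe ε))
    (happ : ∀ ε : ℝ, 0 < ε → ∀ s : ℝ, 0 ≤ s → |x s - xe ε s| ≤ ε)
    (hq : ∀ T : ℝ, 0 ≤ T →
      TendstoUniformlyOn (fun ε s => 2 * lsInt (xe ε) (fun r => x r - xe ε r) s) q
        (𝓝[>] 0) (Icc 0 T))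
    (t : ℝ) (ht : 0 < t) (C : ℝ)
    (hC : ∀ ε : ℝ, 0 < ε → lsAbs (xe ε) (fun r => x r - xe ε r) t ≤ C) :
    eVariationOn q (Icc 0 t) ≤ ENNReal.ofReal (2 * C) ∧
      BoundedVariationOn q (Icc 0 t) :=
  statement6_general x xe q hx hcad hbv happ hq t C hC
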